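/- arXiv:2106.13589 — 3 statements merged into one kernel-verified Lean document; each statement's English description precedes it below -/
import Mathlib

section
/- Let l(t) = t·v + w with v ∈ [1,∞)^n. For all a, b ∈ ℝ^n and all p ∈ [1,∞], |push^l(a) − push^l(b)| ≤ ‖a − b‖_p, where push^l(a) = min { t : a ≤ t·v + w }. -/
open scoped ENNReal

/-- The ℓ^p norm of a vector in ℝ^n, for `p ∈ [1,∞]`. -/
noncomputable def lpNorm {n : ℕ} (p : ℝ≥0∞) (v : Fin n → ℝ) : ℝ :=
  if p = ⊤ then ⨆ i, |v i| else (∑ i, |v i| ^ p.toReal) ^ (1 / p.toReal)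

/-- Let `l(t) = t·v + w` with `v ∈ [1,∞)^n` and `push a = min {t : a ≤ t·v + w}` (in the
product order on ℝ^n). Then for all `a, b` and all `p ∈ [1,∞]`,
`|push a − push b| ≤ ‖a − b‖_p`. -/
theorem push_lp_stability (n : ℕ) (v w : Fin n → ℝ) (hv : ∀ i, 1 ≤ v i)
    (push : (Fin n → ℝ) → ℝ)
    (hpush : ∀ a, IsLeast {t : ℝ | a ≤ fun i => t * v i + w i} (push a))
    (a b : Fin n → ℝ) (p : ℝ≥0∞) (hp : 1 ≤ p) :
    |push a - push b| ≤ lpNorm p (fun i => a i - b i) := by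
  rcases Nat.eq_zero_or_pos n with hn | hn
  · subst hn
    exfalso
    have h1 := (hpush a).2 (show (push a - 1) ∈ _ from fun i => i.elim0)
    linarith
  haveI : Nonempty (Fin n) := ⟨⟨0, hn⟩⟩
  set M := ⨆ i, |a i - b i| with hMdef
  have hle : ∀ i, |a i - b i| ≤ M := fun i => le_ciSup (f := fun j => |a j - b j|) (Set.Finite.bddAbove (Set.finite_range _)) i
  have hM0 : 0 ≤ M := le_trans (abs_nonneg _) (hle ⟨0, hn⟩)
  -- Step 1: |push a - push b| ≤ M
  have key : ∀ x y : Fin n → ℝ, (∀ i, |x i - y i| ≤ M) → push x ≤ push y + M := by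
    intro x y hxy
    refine (hpush x).2 ?_
    intro i
    have hy := (hpush y).1 i
    have h1 : x i - y i ≤ M := (abs_le.mp (hxy i)).2
    have h2 : M ≤ M * v i := le_mul_of_one_le_right hM0 (hv i)
    simp only [Set.mem_setOf_eq] at hy ⊢
    nlinarith [hv i]
  have hab : push a ≤ push b + M := key a b hle
  have hba : push b ≤ push a + M := key b a (fun i => by rw [abs_sub_comm]; exact hle i)
  have hstep1 : |push a - push b| ≤ M := abs_sub_le_iff.mpr ⟨by linarith, by linarith⟩
  refine hstep1.trans ?_
  -- Step 2: M ≤ lpNorm p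
  unfold lpNorm
  split_ifs with htop
  · exact le_rfl
  have hr : 1 ≤ p.toReal := by
    have := ENNReal.toReal_mono htop hp
    simpa using this
  have hr0 : 0 < p.toReal := lt_of_lt_of_le one_pos hr
  refine ciSup_le fun i => ?_
  have h1 : |a i - b i| ^ p.toReal ≤ ∑ j, |a j - b j| ^ p.toReal :=
    Finset.single_le_sum (f := fun j => |a j - b j| ^ p.toReal) (fun j _ => Real.rpow_nonneg (abs_nonneg _) _) (Finset.mem_univ i)
  have h2 : (|a i - b i| ^ p.toReal) ^ (1 / p.toReal) ≤
      (∑ j, |a j - b j| ^ p.toReal) ^ (1 / p.toReal) :=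
    Real.rpow_le_rpow (Real.rpow_nonneg (abs_nonneg _) _) h1 (by positivity)
  calc |a i - b i| = (|a i - b i| ^ p.toReal) ^ (1 / p.toReal) := by
        rw [← Real.rpow_mul (abs_nonneg _), mul_one_div, div_self hr0.ne', Real.rpow_one]
    _ ≤ _ := h2
end

section
/- For finitely presented barcodes B and C, d_W^∞(B, C) = lim_{p→∞} d_W^p(B, C). -/
open scoped ENNReal Classical

noncomputable section

/-- A point of a (finitely presented) barcode: `(a₁, a₂)` with `a₂` possibly `∞`.
We use `EReal` coordinates for uniformity, with the conventions of the paper. -/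
abbrev EPoint : Type := EReal × EReal

/-- Distance between extended-real coordinates, with the convention `∞ − ∞ = 0`. -/
def cd (x y : EReal) : ℝ≥0∞ :=
  if x = y then 0 else if x = ⊤ ∨ y = ⊤ then ⊤ else ENNReal.ofReal |x.toReal - y.toReal|

/-- The nearest diagonal point `m(a) = ((a₁+a₂)/2, (a₁+a₂)/2)`. -/
def mpt (a : EPoint) : EPoint :=
  ((a.1 + a.2) * ((1 / 2 : ℝ) : EReal), (a.1 + a.2) * ((1 / 2 : ℝ) : EReal))

/-- `σ` is a (partial) matching: no index of either side is used twice. -/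
def IsMatching {m q : ℕ} (σ : Finset (Fin m × Fin q)) : Prop :=
  ∀ x ∈ σ, ∀ y ∈ σ, (x.1 = y.1 ∨ x.2 = y.2) → x = y

/-- Left indices unmatched by `σ`. -/
def unmatchedL {m q : ℕ} (σ : Finset (Fin m × Fin q)) : Finset (Fin m) :=
  Finset.univ.filter fun i => ∀ x ∈ σ, x.1 ≠ i

/-- Right indices unmatched by `σ`. -/
def unmatchedR {m q : ℕ} (σ : Finset (Fin m × Fin q)) : Finset (Fin q) :=
  Finset.univ.filter fun j => ∀ x ∈ σ, x.2 ≠ j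

/-- The cost `cost(σ,p)` of a matching: for finite `p`, the `p`-th root of the sum of the
`ℓ^p`-costs of matched pairs and of the diagonal costs of unmatched points; for `p = ∞`,
the corresponding maximum of `ℓ^∞`-costs. -/
def wcost (p : ℝ≥0∞) {m q : ℕ} (B : Fin m → EPoint) (C : Fin q → EPoint)
    (σ : Finset (Fin m × Fin q)) : ℝ≥0∞ :=
  if p = ⊤ then
    max (σ.sup fun x => max (cd (B x.1).1 (C x.2).1) (cd (B x.1).2 (C x.2).2))
      (max ((unmatchedL σ).sup fun i =>
              max (cd (B i).1 (mpt (B i)).1) (cd (B i).2 (mpt (B i)).2))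
           ((unmatchedR σ).sup fun j =>
              max (cd (C j).1 (mpt (C j)).1) (cd (C j).2 (mpt (C j)).2)))
  else
    ((∑ x ∈ σ, (cd (B x.1).1 (C x.2).1 ^ p.toReal + cd (B x.1).2 (C x.2).2 ^ p.toReal)) +
     (∑ i ∈ unmatchedL σ,
        (cd (B i).1 (mpt (B i)).1 ^ p.toReal + cd (B i).2 (mpt (B i)).2 ^ p.toReal)) +
     (∑ j ∈ unmatchedR σ,
        (cd (C j).1 (mpt (C j)).1 ^ p.toReal + cd (C j).2 (mpt (C j)).2 ^ p.toReal)))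
      ^ (1 / p.toReal)

/-- The `p`-Wasserstein distance between (finitely presented) barcodes: the infimum of
`cost(σ,p)` over all matchings `σ`. -/
def dW (p : ℝ≥0∞) {m q : ℕ} (B : Fin m → EPoint) (C : Fin q → EPoint) : ℝ≥0∞ :=
  ⨅ (σ : Finset (Fin m × Fin q)) (_ : IsMatching σ), wcost p B C σ

/-- A finitely presented barcode: each interval `[a₁,a₂)` has real left endpoint and
`a₁ < a₂ ∈ ℝ ∪ {∞}`. -/
def IsBarcode {m : ℕ} (B : Fin m → EPoint) : Prop :=
  ∀ i, (B i).1 < (B i).2 ∧ ∃ x : ℝ, (B i).1 = (x : EReal)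

/-! For a fixed matching `σ`, `cost(σ, p)` is the `ℓ^p`-norm of one finite family of coordinate
distances (one per matched pair or unmatched interval and per endpoint) and `cost(σ, ∞)` is its
`ℓ^∞`-norm. On a family of `n` terms with maximum `M` one has `M ≤ ‖·‖_p ≤ n ^ (1/p) M`, so
`cost(σ, p) → cost(σ, ∞)`; as there are finitely many matchings and a finite minimum is
continuous, `d_W^p → d_W^∞`. -/

open Filter Topology Finset

lemma ENNReal.tendsto_natCast_rpow_one_div_atTop {n : ℕ} (hn : n ≠ 0) :
    Tendsto (fun t : ℝ => (n : ℝ≥0∞) ^ (1 / t)) atTop (𝓝 1) := by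
  have hn' : (0 : ℝ) < n := by exact_mod_cast Nat.pos_of_ne_zero hn
  have hreal : Tendsto (fun t : ℝ => (n : ℝ) ^ (1 / t)) atTop (𝓝 1) := by
    simpa [Function.comp_def] using (Real.continuousAt_const_rpow hn'.ne').tendsto.comp
      (tendsto_const_nhds.div_atTop tendsto_id : Tendsto (fun t : ℝ => 1 / t) atTop (𝓝 0))
  refine (ENNReal.ofReal_one ▸ ENNReal.tendsto_ofReal hreal).congr fun t => ?_
  rw [← ENNReal.ofReal_rpow_of_pos hn', ENNReal.ofReal_natCast]

namespace Finset

variable {ι : Type*} (s : Finset ι) (f : ι → ℝ≥0∞) {t : ℝ}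

lemma sup_le_sum_rpow_one_div (ht : 0 < t) : s.sup f ≤ (∑ i ∈ s, f i ^ t) ^ (1 / t) :=
  Finset.sup_le fun i hi => calc
    f i = (f i ^ t) ^ (1 / t) := by rw [one_div, ENNReal.rpow_rpow_inv ht.ne']
    _ ≤ (∑ i ∈ s, f i ^ t) ^ (1 / t) :=
      ENNReal.rpow_le_rpow (single_le_sum (f := (· ^ t) ∘ f) (fun _ _ => zero_le) hi)
        (by positivity)

lemma sum_rpow_one_div_le (ht : 0 < t) :
    (∑ i ∈ s, f i ^ t) ^ (1 / t) ≤ (#s : ℝ≥0∞) ^ (1 / t) * s.sup f := calc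
  (∑ i ∈ s, f i ^ t) ^ (1 / t) ≤ (#s * s.sup f ^ t) ^ (1 / t) := by
    gcongr
    rw [← nsmul_eq_mul, ← sum_const]
    exact sum_le_sum fun i hi => ENNReal.rpow_le_rpow (le_sup hi) ht.le
  _ = (#s : ℝ≥0∞) ^ (1 / t) * s.sup f := by
    rw [ENNReal.mul_rpow_of_nonneg _ _ (by positivity), one_div,
      ENNReal.rpow_rpow_inv ht.ne']

theorem tendsto_sum_rpow_one_div_atTop :
    Tendsto (fun t : ℝ => (∑ i ∈ s, f i ^ t) ^ (1 / t)) atTop (𝓝 (s.sup f)) := by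
  rcases s.eq_empty_or_nonempty with rfl | hs
  · refine tendsto_const_nhds.congr' ?_
    filter_upwards [eventually_gt_atTop 0] with t ht
    simp [one_div, ENNReal.zero_rpow_of_pos (inv_pos.mpr ht)]
  have hupper : Tendsto (fun t : ℝ => (#s : ℝ≥0∞) ^ (1 / t) * s.sup f) atTop (𝓝 (s.sup f)) := by
    simpa using ENNReal.Tendsto.mul_const
      (ENNReal.tendsto_natCast_rpow_one_div_atTop hs.card_pos.ne') (.inl one_ne_zero)
  refine tendsto_of_tendsto_of_tendsto_of_le_of_le' tendsto_const_nhds hupper ?_ ?_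
  · filter_upwards [eventually_gt_atTop 0] with t ht using s.sup_le_sum_rpow_one_div f ht
  · filter_upwards [eventually_gt_atTop 0] with t ht using s.sum_rpow_one_div_le f ht

end Finset

section MatchingCost

variable {m q : ℕ} (B : Fin m → EPoint) (C : Fin q → EPoint)

def comparedPair : (Fin m × Fin q) ⊕ (Fin m ⊕ Fin q) → EPoint × EPoint
  | .inl x => (B x.1, C x.2)
  | .inr (.inl i) => (B i, mpt (B i))
  | .inr (.inr j) => (C j, mpt (C j))

def coordDist : ((Fin m × Fin q) ⊕ (Fin m ⊕ Fin q)) × Bool → ℝ≥0∞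
  | (k, true) => cd (comparedPair B C k).1.1 (comparedPair B C k).2.1
  | (k, false) => cd (comparedPair B C k).1.2 (comparedPair B C k).2.2

def costTerms (σ : Finset (Fin m × Fin q)) : Finset (((Fin m × Fin q) ⊕ (Fin m ⊕ Fin q)) × Bool) :=
  (σ.disjSum ((unmatchedL σ).disjSum (unmatchedR σ))) ×ˢ univ

lemma wcost_top_eq_sup (σ : Finset (Fin m × Fin q)) :
    wcost ⊤ B C σ = (costTerms σ).sup (coordDist B C) := by
  simp only [wcost, if_true, costTerms, sup_product_left, sup_disjSum, Fintype.univ_bool,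
    sup_insert, sup_singleton]
  rfl

lemma wcost_ofReal_eq_sum (σ : Finset (Fin m × Fin q)) {t : ℝ} (ht : 0 ≤ t) :
    wcost (ENNReal.ofReal t) B C σ = (∑ x ∈ costTerms σ, coordDist B C x ^ t) ^ (1 / t) := by
  simp only [wcost, ENNReal.ofReal_ne_top, if_false, ENNReal.toReal_ofReal ht, costTerms,
    sum_product, sum_disjSum, Fintype.sum_bool, add_assoc]
  rfl

lemma tendsto_wcost_ofReal_atTop (σ : Finset (Fin m × Fin q)) :
    Tendsto (fun t : ℝ => wcost (ENNReal.ofReal t) B C σ) atTop (𝓝 (wcost ⊤ B C σ)) := by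
  rw [wcost_top_eq_sup]
  refine (tendsto_sum_rpow_one_div_atTop _ _).congr' ?_
  filter_upwards [eventually_ge_atTop 0] with t ht using (wcost_ofReal_eq_sum B C σ ht).symm

lemma dW_eq_inf (p : ℝ≥0∞) : dW p B C = {σ | IsMatching σ}.toFinset.inf (wcost p B C) := by
  simp [dW, Finset.inf_eq_iInf]

end MatchingCost

theorem dW_top_eq_lim_general {m q : ℕ}
    (B : Fin m → EPoint) (C : Fin q → EPoint) :
    Filter.Tendsto (fun t : ℝ => dW (ENNReal.ofReal t) B C) Filter.atTop
      (nhds (dW ⊤ B C)) := by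
  simp only [dW_eq_inf]
  exact Tendsto.finset_inf_nhds_apply fun σ _ => tendsto_wcost_ofReal_atTop B C σ

/-- For finitely presented barcodes `B` and `C`,
`d_W^∞(B,C) = lim_{p→∞} d_W^p(B,C)`. -/
theorem dW_top_eq_lim {m q : ℕ}
    (B : Fin m → EPoint) (C : Fin q → EPoint)
    (hB : IsBarcode B) (hC : IsBarcode C) :
    Filter.Tendsto (fun t : ℝ => dW (ENNReal.ofReal t) B C) Filter.atTop
      (nhds (dW ⊤ B C)) :=
  dW_top_eq_lim_general B C

end
end

section
/- Let p ∈ [1,∞) and r > 0. Consider the ℝ²-persistence module M with M_a = k if a ≥ (0,−1) or a ≥ (−1,0) and M_a = 0 otherwise (identity internal maps where possible), and the free modules Q^{(0,0)}, Q^{(r,r)} on single generators at (0,0) and (r,r). Then d̂_I^p(M, Q^{(r,r)}) ≥ 4^{1/p} r, d̂_I^p(M, Q^{(0,0)}) ≤ 2^{1/p}, and d̂_I^p(Q^{(0,0)}, Q^{(r,r)}) ≤ 2^{1/p} r. Consequently, for r sufficiently large, d̂_I^p(M, Q^{(r,r)}) > d̂_I^p(M, Q^{(0,0)}) + d̂_I^p(Q^{(0,0)},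 Q^{(r,r)}), so d̂_I^p fails the triangle inequality. -/
open scoped Classical

noncomputable section

/-- A persistence module indexed by a poset `X`, with coefficients in a field `k`:
a functor from `X` to `Vect_k`, given concretely. -/
structure PersMod (X : Type) [PartialOrder X] (k : Type) [Field k] where
  V : X → Type
  [addCommGroup : ∀ a, AddCommGroup (V a)]
  [module : ∀ a, Module k (V a)]
  map : ∀ {a b : X}, a ≤ b → (V a →ₗ[k] V b)
  map_id : ∀ a : X, map (le_refl a) = LinearMap.id
  map_comp : ∀ {a b c : X} (hab : a ≤ b) (hbc : b ≤ c),
    (map hbc).comp (map hab) = map (hab.trans hbc)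

attribute [instance] PersMod.addCommGroup PersMod.module

/-- The free persistence module `⊕_{i} Q^{g i}` on generators at grades `g i`:
at index `a` it is the space of `k`-vectors supported on `{i : g i ≤ a}`. -/
def FreeMod {X : Type} [PartialOrder X] (k : Type) [Field k] {m : ℕ} (g : Fin m → X) :
    PersMod X k where
  V a := {i : Fin m // g i ≤ a} → k
  map {a b} hab :=
    { toFun := fun f i => if h : g i.1 ≤ a then f ⟨i.1, h⟩ else 0
      map_add' := by
        intro f f'; funext i; by_cases h : g i.1 ≤ a <;> simp [h]
      map_smul' := by
        intro c f; funext i; by_cases h : g i.1 ≤ a <;> simp [h] }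
  map_id a := by
    apply LinearMap.ext; intro f; funext i
    simp only [LinearMap.coe_mk, AddHom.coe_mk, LinearMap.id_coe, id_eq]
    rw [dif_pos i.2]
  map_comp {a b c} hab hbc := by
    apply LinearMap.ext; intro f; funext i
    simp only [LinearMap.comp_apply, LinearMap.coe_mk, AddHom.coe_mk]
    by_cases h : g i.1 ≤ a
    · rw [dif_pos (h.trans hab), dif_pos h]
    · rw [dif_neg h]
      by_cases hb : g i.1 ≤ b
      · rw [dif_pos hb, dif_neg h]
      · rw [dif_neg hb]

/-- A morphism of persistence modules: a natural transformation. -/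
structure PersHom {X : Type} [PartialOrder X] {k : Type} [Field k]
    (M N : PersMod X k) where
  app : ∀ a : X, M.V a →ₗ[k] N.V a
  natural : ∀ {a b : X} (h : a ≤ b), (N.map h).comp (app a) = (app b).comp (M.map h)

/-- A set `S` of graded elements generates `M` if every element of `M` is a linear
combination of images of elements of `S` under the internal maps. -/
def IsGenSet {X : Type} [PartialOrder X] {k : Type} [Field k]
    (M : PersMod X k) (S : Set (Σ a : X, M.V a)) : Prop :=
  ∀ (a : X) (v : M.V a),
    v ∈ Submodule.span k {w : M.V a | ∃ s ∈ S, ∃ h : s.1 ≤ a, w = M.map h s.2}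

/-- A basis of a persistence module is a minimal generating set. -/
def IsPMBasis {X : Type} [PartialOrder X] {k : Type} [Field k]
    (M : PersMod X k) (B : Set (Σ a : X, M.V a)) : Prop :=
  IsGenSet M B ∧ ∀ B' ⊆ B, IsGenSet M B' → B' = B

/-- A persistence module is free if it is isomorphic to a finite direct sum of modules
`Q^x` (equivalently, to some `FreeMod g`). -/
def IsFree {X : Type} [PartialOrder X] {k : Type} [Field k] (M : PersMod X k) : Prop :=
  ∃ (m : ℕ) (g : Fin m → X) (φ : PersHom (FreeMod k g) M),
    ∀ a : X, Function.Bijective (φ.app a)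


open scoped ENNReal

/-- `φ` is the morphism of free modules represented by the labeled matrix `(A, rl, cl)`
(rows labeled by `rl`, columns by `cl`). -/
def MatHomSpec {X : Type} [PartialOrder X] {k : Type} [Field k] {r c : ℕ}
    (A : Matrix (Fin r) (Fin c) k) (rl : Fin r → X) (cl : Fin c → X)
    (φ : PersHom (FreeMod k cl) (FreeMod k rl)) : Prop :=
  ∀ (a : X) (f : {j : Fin c // cl j ≤ a} → k) (i : {i : Fin r // rl i ≤ a}),
    φ.app a f i = ∑ j : Fin c, if h : cl j ≤ a then A i.1 j * f ⟨j, h⟩ else 0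

/-- The labeled matrix `(A, rl, cl)` is a presentation matrix of `M`: the matrix map
between the corresponding free modules has cokernel (objectwise) isomorphic to `M`,
witnessed by an objectwise surjection `ψ` with `ker ψ = im φ`. -/
def Presents {X : Type} [PartialOrder X] {k : Type} [Field k] {r c : ℕ}
    (A : Matrix (Fin r) (Fin c) k) (rl : Fin r → X) (cl : Fin c → X)
    (M : PersMod X k) : Prop :=
  ∃ φ : PersHom (FreeMod k cl) (FreeMod k rl), MatHomSpec A rl cl φ ∧
    ∃ ψ : PersHom (FreeMod k rl) M, ∀ a : X,
      Function.Surjective (ψ.app a) ∧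
      LinearMap.ker (ψ.app a) = LinearMap.range (φ.app a)

/-- The ℓ^p-distance between the label vectors of two presentations with the same
underlying matrix (labels in ℝ², total ℓ^p-norm over all coordinates). -/
def labelDist (p : ℝ) {r c : ℕ} (rl rl' : Fin r → ℝ × ℝ) (cl cl' : Fin c → ℝ × ℝ) : ℝ :=
  ((∑ i, (|(rl i).1 - (rl' i).1| ^ p + |(rl i).2 - (rl' i).2| ^ p)) +
   (∑ j, (|(cl j).1 - (cl' j).1| ^ p + |(cl j).2 - (cl' j).2| ^ p))) ^ (1 / p)

/-- `d̂_I^p(M,N)`: the infimum of label distances over all pairs of finite presentations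
of `M` and `N` with the same underlying matrix. -/
def dhatI {k : Type} [Field k] (p : ℝ) (M N : PersMod (ℝ × ℝ) k) : ℝ≥0∞ :=
  ⨅ (r : ℕ) (c : ℕ) (A : Matrix (Fin r) (Fin c) k)
    (rl : Fin r → ℝ × ℝ) (rl' : Fin r → ℝ × ℝ)
    (cl : Fin c → ℝ × ℝ) (cl' : Fin c → ℝ × ℝ)
    (_ : Presents A rl cl M) (_ : Presents A rl' cl' N),
    ENNReal.ofReal (labelDist p rl rl' cl cl')

/-! Above all of its labels a presentation is just its matrix, so two presentations with the
same matrix send the same generators to zero there. In a presentation of `Q^{(r,r)}` every row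
labelled below `(r,r)` is sent to zero, whereas a presentation of `M` needs two distinct rows that
survive, labelled below `(0,-1)` and below `(-1,0)`; a single row would sit below `(-1,-1)`, where
`M` vanishes. Moving both labels above `(r,r)` costs at least `4 r^p`. The upper bounds come from
presenting `M` by the matrix `(1, -1)ᵀ` with rows at `(0,-1)`, `(-1,0)` and column at `(0,0)`,
`Q^x` by the same matrix with all labels at `x`, and `Q^x` by the matrix with no columns. -/

namespace FreeMod

variable {X : Type} [PartialOrder X] {k : Type} [Field k] {m : ℕ} {g : Fin m → X}

variable (k g) in
def single (a : X) (i : Fin m) : (FreeMod k g).V a :=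
  fun j => if j.1 = i then 1 else 0

theorem map_apply {a b : X} (hab : a ≤ b) (f : (FreeMod k g).V a) (i : {i // g i ≤ b}) :
    (FreeMod k g).map hab f i = if h : g i.1 ≤ a then f ⟨i.1, h⟩ else 0 :=
  rfl

theorem map_single {a b : X} (hab : a ≤ b) {i : Fin m} (hi : g i ≤ a) :
    (FreeMod k g).map hab (single k g a i) = single k g b i := by
  funext j
  rw [map_apply]
  by_cases hj : j.1 = i
  · rw [dif_pos (hj ▸ hi)]
    simp [single, hj]
  · simp [single, hj]

theorem eq_sum_single {a : X} (f : (FreeMod k g).V a) :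
    f = ∑ j : {i // g i ≤ a}, f j • single k g a j.1 := by
  refine (pi_eq_sum_univ f).trans (Finset.sum_congr rfl fun j _ => ?_)
  congr 1
  funext j'
  simp only [single, Subtype.ext_iff, eq_comm]

theorem eq_zero_of_forall_not_le {a : X} (h : ∀ i, ¬ g i ≤ a) (f : (FreeMod k g).V a) : f = 0 :=
  funext fun i => absurd i.2 (h i)

variable {M : PersMod X k}

def lift (g : Fin m → X) (v : ∀ i, M.V (g i)) : PersHom (FreeMod k g) M where
  app a :=
    { toFun := fun f => ∑ i, if h : g i ≤ a then f ⟨i, h⟩ • M.map h (v i) else 0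
      map_add' := fun f f' => by
        rw [← Finset.sum_add_distrib]
        refine Finset.sum_congr rfl fun i _ => ?_
        split_ifs
        exacts [add_smul _ _ _, (add_zero 0).symm]
      map_smul' := fun c f => by
        rw [RingHom.id_apply, Finset.smul_sum]
        refine Finset.sum_congr rfl fun i _ => ?_
        split_ifs
        exacts [mul_smul _ _ _, (smul_zero c).symm] }
  natural := by
    intro a b hab
    ext f
    simp only [LinearMap.comp_apply, LinearMap.coe_mk, AddHom.coe_mk, map_sum]
    refine Finset.sum_congr rfl fun i _ => ?_
    by_cases ha : g i ≤ a
    · simp [ha, ha.trans hab, map_apply, ← LinearMap.comp_apply, M.map_comp]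
    · by_cases hb : g i ≤ b <;> simp [ha, hb, map_apply]

theorem lift_app_apply (v : ∀ i, M.V (g i)) (a : X) (f : (FreeMod k g).V a) :
    (lift g v).app a f = ∑ i, if h : g i ≤ a then f ⟨i, h⟩ • M.map h (v i) else 0 :=
  rfl

theorem lift_app_single (v : ∀ i, M.V (g i)) {a : X} {i : Fin m} (hi : g i ≤ a) :
    (lift g v).app a (single k g a i) = M.map hi (v i) := by
  rw [lift_app_apply, Finset.sum_eq_single i]
  · simp [hi, single]
  · intro j _ hji
    split_ifs <;> simp [single, hji]
  · simp

variable {r c : ℕ}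

def ofMatrix (A : Matrix (Fin r) (Fin c) k) (rl : Fin r → X) (cl : Fin c → X) :
    PersHom (FreeMod k cl) (FreeMod k rl) :=
  lift cl fun j i => A i.1 j

theorem matHomSpec_ofMatrix (A : Matrix (Fin r) (Fin c) k) (rl : Fin r → X) (cl : Fin c → X)
    (hA : ∀ i j, A i j ≠ 0 → rl i ≤ cl j) : MatHomSpec A rl cl (ofMatrix A rl cl) := by
  intro a f i
  refine (congrFun (lift_app_apply _ a f) i).trans <|
    (Finset.sum_apply (M := fun _ => k) i _ _).trans <| Finset.sum_congr rfl fun j _ => ?_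
  by_cases hj : cl j ≤ a
  · rw [dif_pos hj, dif_pos hj, mul_comm]
    change _ * (if h : rl i.1 ≤ cl j then A i.1 j else 0) = _
    split_ifs with hij
    · rfl
    · rw [not_imp_comm.mp (hA i.1 j) hij]
  · rw [dif_neg hj, dif_neg hj]
    rfl

end FreeMod

section Hom

variable {X : Type} [PartialOrder X] {k : Type} [Field k]

theorem PersHom.app_map {M N : PersMod X k} (ψ : PersHom M N) {a b : X} (h : a ≤ b) (v : M.V a) :
    ψ.app b (M.map h v) = N.map h (ψ.app a v) :=
  (LinearMap.congr_fun (ψ.natural h) v).symm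

variable {m : ℕ} {g : Fin m → X} {M : PersMod X k}

theorem PersHom.app_single_eq_zero (ψ : PersHom (FreeMod k g) M) {i : Fin m} {c b : X}
    (hi : g i ≤ c) (hcb : c ≤ b) (hc : ∀ v : M.V c, v = 0) :
    ψ.app b (FreeMod.single k g b i) = 0 := by
  rw [← FreeMod.map_single hcb hi, ψ.app_map, hc (ψ.app c _), map_zero]

theorem PersHom.exists_app_single_ne_zero (ψ : PersHom (FreeMod k g) M) {a b : X}
    (hψ : Function.Surjective (ψ.app a)) (hab : a ≤ b) {v : M.V a} (hv : M.map hab v ≠ 0) :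
    ∃ i, g i ≤ a ∧ ψ.app b (FreeMod.single k g b i) ≠ 0 := by
  obtain ⟨f, rfl⟩ := hψ v
  rw [← ψ.app_map, FreeMod.eq_sum_single f, map_sum, map_sum] at hv
  obtain ⟨j, -, hj⟩ := Finset.exists_ne_zero_of_sum_ne_zero hv
  refine ⟨j.1, j.2, fun h => hj ?_⟩
  rw [map_smul, FreeMod.map_single hab j.2, map_smul, h, smul_zero]

end Hom

namespace MatHomSpec

open scoped Matrix

variable {X : Type} [PartialOrder X] {k : Type} [Field k] {r c : ℕ}
  {A : Matrix (Fin r) (Fin c) k} {rl : Fin r → X} {cl : Fin c → X}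
  {φ : PersHom (FreeMod k cl) (FreeMod k rl)}

theorem app_apply_of_forall_le (hφ : MatHomSpec A rl cl φ) {a : X} (hcl : ∀ j, cl j ≤ a)
    (f : (FreeMod k cl).V a) (i : {i // rl i ≤ a}) :
    φ.app a f i = (A *ᵥ fun j => f ⟨j, hcl j⟩) i.1 :=
  (hφ a f i).trans (Finset.sum_congr rfl fun j _ => dif_pos (hcl j))

theorem single_mem_range_iff (hφ : MatHomSpec A rl cl φ) {a : X} (hrl : ∀ i, rl i ≤ a)
    (hcl : ∀ j, cl j ≤ a) (i : Fin r) :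
    FreeMod.single k rl a i ∈ LinearMap.range (φ.app a) ↔
      Pi.single i 1 ∈ LinearMap.range A.mulVecLin := by
  constructor
  · rintro ⟨f, hf⟩
    refine ⟨fun j => f ⟨j, hcl j⟩, funext fun i' => ?_⟩
    have := congrFun hf ⟨i', hrl i'⟩
    rw [app_apply_of_forall_le hφ hcl] at this
    simp [this, FreeMod.single, Pi.single_apply]
  · rintro ⟨w, hw⟩
    refine ⟨(fun j => w j.1 : (FreeMod k cl).V a), funext fun i' => ?_⟩
    refine (app_apply_of_forall_le hφ hcl _ i').trans ?_
    simpa [FreeMod.single, Pi.single_apply] using congrFun hw i'.1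

end MatHomSpec

theorem presents_freeMod {X : Type} [PartialOrder X] {k : Type} [Field k] {n : ℕ}
    (g : Fin n → X) (cl : Fin 0 → X) :
    Presents (0 : Matrix (Fin n) (Fin 0) k) g cl (FreeMod k g) := by
  refine ⟨FreeMod.ofMatrix 0 g cl, FreeMod.matHomSpec_ofMatrix _ _ _ fun _ j => j.elim0,
    ⟨fun _ => LinearMap.id, fun _ => rfl⟩, fun a => ⟨Function.surjective_id, ?_⟩⟩
  have : Subsingleton ((FreeMod k cl).V a) :=
    inferInstanceAs (Subsingleton ({j : Fin 0 // cl j ≤ a} → k))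
  rw [LinearMap.ker_id, eq_comm, LinearMap.range_eq_bot]
  exact Subsingleton.elim _ _

structure IsIndicatorModule {X : Type} [PartialOrder X] {k : Type} [Field k]
    (M : PersMod X k) (S : Set X) : Prop where
  rank_eq_one : ∀ a ∈ S, Module.rank k (M.V a) = 1
  eq_zero : ∀ a ∉ S, ∀ v : M.V a, v = 0
  bijective : ∀ (a b : X) (h : a ≤ b), a ∈ S → Function.Bijective (M.map h)

namespace IsIndicatorModule

variable {X : Type} [PartialOrder X] {k : Type} [Field k] {M : PersMod X k} {S : Set X}

theorem exists_ne_zero (hM : IsIndicatorModule M S) {a : X} (ha : a ∈ S) :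
    ∃ v : M.V a, v ≠ 0 :=
  rank_pos_iff_exists_ne_zero.mp (by rw [hM.rank_eq_one a ha]; exact zero_lt_one)

theorem map_ne_zero (hM : IsIndicatorModule M S) {a b : X} (ha : a ∈ S) (h : a ≤ b)
    {v : M.V a} (hv : v ≠ 0) : M.map h v ≠ 0 :=
  fun h0 => hv ((hM.bijective a b h ha).1 (h0.trans (map_zero _).symm))

theorem exists_smul_eq (hM : IsIndicatorModule M S) {a : X} (ha : a ∈ S) {v : M.V a}
    (hv : v ≠ 0) (w : M.V a) : ∃ c : k, c • v = w :=
  (finrank_eq_one_iff_of_nonzero' v hv).mp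
    (Module.finrank_eq_of_rank_eq (by rw [hM.rank_eq_one a ha]; rfl)) w

theorem exists_compatible_family (hM : IsIndicatorModule M S) {ι : Type} (x : ι → X)
    (hx : ∀ i, x i ∈ S) {c : X} (hc : c ∈ S) (hxc : ∀ i, x i ≤ c) :
    ∃ (v : ∀ i, M.V (x i)) (z : M.V c), z ≠ 0 ∧ ∀ i, M.map (hxc i) (v i) = z := by
  obtain ⟨z, hz⟩ := hM.exists_ne_zero hc
  exact ⟨fun i => ((hM.bijective _ _ (hxc i) (hx i)).2 z).choose, z, hz,
    fun i => ((hM.bijective _ _ (hxc i) (hx i)).2 z).choose_spec⟩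

end IsIndicatorModule

theorem isIndicatorModule_freeMod {X : Type} [PartialOrder X] {k : Type} [Field k] (x : X) :
    IsIndicatorModule (FreeMod k fun _ : Fin 1 => x) (Set.Ici x) where
  rank_eq_one a ha := by
    change Module.rank k ({i : Fin 1 // x ≤ a} → k) = 1
    rw [rank_fun']
    simp [Set.mem_Ici.mp ha]
  eq_zero a ha := FreeMod.eq_zero_of_forall_not_le fun _ => ha
  bijective a b hab ha := by
    refine ⟨fun f f' hff' => funext fun i => ?_, fun f => ⟨fun i => f ⟨i.1, i.2.trans hab⟩, ?_⟩⟩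
    · simpa [FreeMod.map_apply, i.2] using congrFun hff' ⟨i.1, i.2.trans hab⟩
    · funext i
      exact dif_pos (Set.mem_Ici.mp ha)

section TwoGenerators

variable {X : Type} [SemilatticeSup X] {k : Type} [Field k] {M : PersMod X k} {x : Fin 2 → X}

theorem le_sup_fin_two (x : Fin 2 → X) (i : Fin 2) : x i ≤ x 0 ⊔ x 1 := by
  fin_cases i
  exacts [le_sup_left, le_sup_right]

theorem sup_le_fin_two_of_ne {a : X} {i j : Fin 2} (hij : i ≠ j) (hi : x i ≤ a)
    (hj : x j ≤ a) : x 0 ⊔ x 1 ≤ a := by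
  fin_cases i <;> fin_cases j <;> simp_all

theorem lift_app_of_sup_le {v : ∀ i, M.V (x i)} {z : M.V (x 0 ⊔ x 1)}
    (hvz : ∀ i, M.map (le_sup_fin_two x i) (v i) = z) {a : X} (ha : x 0 ⊔ x 1 ≤ a)
    (f : (FreeMod k x).V a) :
    (FreeMod.lift x v).app a f =
      (f ⟨0, (le_sup_fin_two x 0).trans ha⟩ + f ⟨1, (le_sup_fin_two x 1).trans ha⟩) •
        M.map ha z := by
  have hv : ∀ i (h : x i ≤ a), M.map h (v i) = M.map ha z := fun i h => by
    rw [← hvz i, ← LinearMap.comp_apply, M.map_comp]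
  rw [FreeMod.lift_app_apply, Fin.sum_univ_two, dif_pos ((le_sup_fin_two x 0).trans ha),
    dif_pos ((le_sup_fin_two x 1).trans ha), hv, hv, add_smul]

theorem lift_app_of_not_sup_le (v : ∀ i, M.V (x i)) {a : X} (ha : ¬ x 0 ⊔ x 1 ≤ a) {i : Fin 2}
    (hi : x i ≤ a) (f : (FreeMod k x).V a) :
    (FreeMod.lift x v).app a f = f ⟨i, hi⟩ • M.map hi (v i) := by
  rw [FreeMod.lift_app_apply, Finset.sum_eq_single i, dif_pos hi]
  · exact fun j _ hji => dif_neg fun hj => ha (sup_le_fin_two_of_ne hji hj hi)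
  · simp

theorem ker_lift_eq_range_ofMatrix (hM : IsIndicatorModule M {a | ∃ i, x i ≤ a})
    {v : ∀ i, M.V (x i)} {z : M.V (x 0 ⊔ x 1)} (hz : z ≠ 0)
    (hvz : ∀ i, M.map (le_sup_fin_two x i) (v i) = z) (a : X) :
    LinearMap.ker ((FreeMod.lift x v).app a) =
      LinearMap.range ((FreeMod.ofMatrix !![(1 : k); -1] x fun _ => x 0 ⊔ x 1).app a) := by
  have hφ := FreeMod.matHomSpec_ofMatrix !![(1 : k); -1] x (fun _ => x 0 ⊔ x 1)
    fun i _ _ => le_sup_fin_two x i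
  by_cases ha : x 0 ⊔ x 1 ≤ a
  · have hza : M.map ha z ≠ 0 := hM.map_ne_zero ⟨0, le_sup_left⟩ ha hz
    ext f
    rw [LinearMap.mem_ker, lift_app_of_sup_le hvz ha, smul_eq_zero, or_iff_left hza,
      LinearMap.mem_range]
    constructor
    · intro hf
      refine ⟨fun _ => f ⟨0, (le_sup_fin_two x 0).trans ha⟩, funext fun ⟨i, hi⟩ => ?_⟩
      refine (hφ a _ _).trans ?_
      fin_cases i
      · simp [ha]
      · simp [ha, eq_neg_of_add_eq_zero_right hf]
    · rintro ⟨y, rfl⟩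
      rw [hφ a y, hφ a y]
      simp [ha]
  · have hφa : ∀ y, (FreeMod.ofMatrix !![(1 : k); -1] x fun _ => x 0 ⊔ x 1).app a y = 0 :=
      fun y => funext fun i => (hφ a y i).trans (by simp [ha]; rfl)
    rw [LinearMap.range_eq_bot.mpr (LinearMap.ext hφa), LinearMap.ker_eq_bot']
    refine fun f hf => funext fun ⟨i, hi⟩ => ?_
    rw [lift_app_of_not_sup_le v ha hi, smul_eq_zero] at hf
    refine hf.resolve_right (hM.map_ne_zero ⟨i, le_rfl⟩ hi fun hvi => hz ?_)
    rw [← hvz i, hvi, map_zero]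

theorem lift_app_surjective (hM : IsIndicatorModule M {a | ∃ i, x i ≤ a})
    {v : ∀ i, M.V (x i)} {z : M.V (x 0 ⊔ x 1)} (hz : z ≠ 0)
    (hvz : ∀ i, M.map (le_sup_fin_two x i) (v i) = z) (a : X) :
    Function.Surjective ((FreeMod.lift x v).app a) := by
  intro w
  by_cases ha : a ∈ {a | ∃ i, x i ≤ a}
  · obtain ⟨i, hi⟩ := ha
    have hvi : M.map hi (v i) ≠ 0 := hM.map_ne_zero ⟨i, le_rfl⟩ hi fun hvi => hz (by
      rw [← hvz i, hvi, map_zero])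
    obtain ⟨c, rfl⟩ := hM.exists_smul_eq ⟨i, hi⟩ hvi w
    exact ⟨c • FreeMod.single k x a i, by rw [map_smul, FreeMod.lift_app_single]⟩
  · exact ⟨0, by rw [map_zero, hM.eq_zero a ha w]⟩

theorem presents_of_isIndicatorModule (hM : IsIndicatorModule M {a | ∃ i, x i ≤ a}) :
    Presents !![(1 : k); -1] x (fun _ => x 0 ⊔ x 1) M := by
  obtain ⟨v, z, hz, hvz⟩ :=
    hM.exists_compatible_family x (fun i => ⟨i, le_rfl⟩) ⟨0, le_sup_left⟩ (le_sup_fin_two x)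
  exact ⟨_, FreeMod.matHomSpec_ofMatrix _ _ _ fun i _ _ => le_sup_fin_two x i, FreeMod.lift x v,
    fun a => ⟨lift_app_surjective hM hz hvz a, ker_lift_eq_range_ofMatrix hM hz hvz a⟩⟩

end TwoGenerators

theorem exists_distinct_rows_of_presents {X : Type} [Lattice X] {k : Type} [Field k]
    {M : PersMod X k} {x : Fin 2 → X} (hx₀₁ : ¬ x 0 ≤ x 1) (hx₁₀ : ¬ x 1 ≤ x 0)
    (hM : IsIndicatorModule M {a | ∃ i, x i ≤ a}) {q : X} {n c : ℕ}
    {A : Matrix (Fin n) (Fin c) k} {rl rl' : Fin n → X} {cl cl' : Fin c → X}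
    (hPM : Presents A rl cl M) (hPQ : Presents A rl' cl' (FreeMod k fun _ : Fin 1 => q)) :
    ∃ i j, i ≠ j ∧ rl i ≤ x 0 ∧ rl j ≤ x 1 ∧ q ≤ rl' i ∧ q ≤ rl' j := by
  obtain ⟨φ, hφ, ψ, hψ⟩ := hPM
  obtain ⟨φ', hφ', ψ', hψ'⟩ := hPQ
  have : Nonempty X := ⟨x 0⟩
  obtain ⟨t, ht⟩ : BddAbove (Set.range rl ∪ Set.range rl' ∪ Set.range cl ∪ Set.range cl' ∪
      Set.range x) := (Set.toFinite _).bddAbove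
  have hrl : ∀ i, rl i ≤ t := fun i => ht (by simp)
  have hrl' : ∀ i, rl' i ≤ t := fun i => ht (by simp)
  have hcl : ∀ j, cl j ≤ t := fun j => ht (by simp)
  have hcl' : ∀ j, cl' j ≤ t := fun j => ht (by simp)
  have hx : ∀ m, x m ≤ t := fun m => ht (by simp)
  have hdead : ∀ i, ¬ q ≤ rl' i → ψ.app t (FreeMod.single k rl t i) = 0 := by
    intro i hi
    have hker : FreeMod.single k rl' t i ∈ LinearMap.ker (ψ'.app t) :=
      ψ'.app_single_eq_zero le_rfl (hrl' i) (FreeMod.eq_zero_of_forall_not_le fun _ => hi)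
    rwa [(hψ' t).2, hφ'.single_mem_range_iff hrl' hcl', ← hφ.single_mem_range_iff hrl hcl,
      ← (hψ t).2] at hker
  have hlive : ∀ m, ∃ i, rl i ≤ x m ∧ ψ.app t (FreeMod.single k rl t i) ≠ 0 := fun m => by
    obtain ⟨w, hw⟩ := hM.exists_ne_zero ⟨m, le_rfl⟩
    exact ψ.exists_app_single_ne_zero (hψ (x m)).1 (hx m) (hM.map_ne_zero ⟨m, le_rfl⟩ _ hw)
  choose e hle hne using hlive
  refine ⟨e 0, e 1, fun h => hne 0 ?_, hle 0, hle 1, ?_, ?_⟩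
  · have hinf : x 0 ⊓ x 1 ∉ {a | ∃ i, x i ≤ a} := by
      rintro ⟨m, hm⟩
      fin_cases m
      exacts [hx₀₁ (hm.trans inf_le_right), hx₁₀ (hm.trans inf_le_left)]
    exact ψ.app_single_eq_zero (le_inf (hle 0) (h ▸ hle 1)) (inf_le_left.trans (hx 0))
      (hM.eq_zero _ hinf)
  all_goals exact not_not.mp fun h => hne _ (hdead _ h)

theorem mul_rpow_rpow_one_div {c r p : ℝ} (hc : 0 ≤ c) (hr : 0 ≤ r) (hp : p ≠ 0) :
    (c * r ^ p) ^ (1 / p) = c ^ (1 / p) * r := by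
  rw [Real.mul_rpow hc (Real.rpow_nonneg hr p), ← Real.rpow_mul hr, mul_one_div_cancel hp,
    Real.rpow_one]

theorem exists_pos_add_mul_lt_mul {α β : ℝ} (hα : 0 ≤ α) (hαβ : α < β) :
    ∃ r > 0, α + α * r < β * r := by
  refine ⟨(α + 1) / (β - α), div_pos (by linarith) (by linarith), ?_⟩
  have : β * ((α + 1) / (β - α)) - α * ((α + 1) / (β - α)) = α + 1 := by
    rw [← sub_mul, mul_div_cancel₀ _ (by linarith)]
  linarith

theorem rpow_mul_le_labelDist {p r : ℝ} (hp : 0 < p) (hr : 0 ≤ r) {n c : ℕ}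
    {rl rl' : Fin n → ℝ × ℝ} {cl cl' : Fin c → ℝ × ℝ} (s : Finset (Fin n))
    (hs : ∀ i ∈ s, r ≤ |(rl i).1 - (rl' i).1| ∧ r ≤ |(rl i).2 - (rl' i).2|) :
    (2 * s.card : ℝ) ^ (1 / p) * r ≤ labelDist p rl rl' cl cl' := by
  have hnonneg : ∀ u v : ℝ, 0 ≤ |u| ^ p + |v| ^ p := fun u v => by positivity
  have hsum : 2 * s.card * r ^ p ≤
      (∑ i, (|(rl i).1 - (rl' i).1| ^ p + |(rl i).2 - (rl' i).2| ^ p)) +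
        ∑ j, (|(cl j).1 - (cl' j).1| ^ p + |(cl j).2 - (cl' j).2| ^ p) :=
    calc 2 * s.card * r ^ p = ∑ i ∈ s, (r ^ p + r ^ p) := by
          rw [Finset.sum_const, nsmul_eq_mul]
          ring
      _ ≤ ∑ i ∈ s, (|(rl i).1 - (rl' i).1| ^ p + |(rl i).2 - (rl' i).2| ^ p) :=
          Finset.sum_le_sum fun i hi => add_le_add
            (Real.rpow_le_rpow hr (hs i hi).1 hp.le) (Real.rpow_le_rpow hr (hs i hi).2 hp.le)
      _ ≤ ∑ i, (|(rl i).1 - (rl' i).1| ^ p + |(rl i).2 - (rl' i).2| ^ p) :=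
          Finset.sum_le_sum_of_subset_of_nonneg s.subset_univ fun i _ _ => hnonneg _ _
      _ ≤ _ := le_add_of_nonneg_right (Finset.sum_nonneg fun j _ => hnonneg _ _)
  rw [← mul_rpow_rpow_one_div (by positivity) hr hp.ne', labelDist]
  exact Real.rpow_le_rpow (by positivity) hsum (by positivity)

section Dhat

variable {k : Type} [Field k] {p : ℝ}

theorem dhatI_le_labelDist {M N : PersMod (ℝ × ℝ) k} {n c : ℕ} {A : Matrix (Fin n) (Fin c) k}
    {rl rl' : Fin n → ℝ × ℝ} {cl cl' : Fin c → ℝ × ℝ}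
    (hM : Presents A rl cl M) (hN : Presents A rl' cl' N) :
    dhatI p M N ≤ ENNReal.ofReal (labelDist p rl rl' cl cl') :=
  iInf_le_of_le n <| iInf_le_of_le c <| iInf_le_of_le A <| iInf_le_of_le rl <|
    iInf_le_of_le rl' <| iInf_le_of_le cl <| iInf_le_of_le cl' <| iInf_le_of_le hM <|
      iInf_le _ hN

theorem ofReal_le_dhatI {M N : PersMod (ℝ × ℝ) k} {d : ℝ}
    (h : ∀ (n c : ℕ) (A : Matrix (Fin n) (Fin c) k) (rl rl' : Fin n → ℝ × ℝ)
      (cl cl' : Fin c → ℝ × ℝ), Presents A rl cl M → Presents A rl' cl' N →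
        d ≤ labelDist p rl rl' cl cl') :
    ENNReal.ofReal d ≤ dhatI p M N := by
  simp only [dhatI, le_iInf_iff]
  exact fun n c A rl rl' cl cl' hM hN => ENNReal.ofReal_le_ofReal (h n c A rl rl' cl cl' hM hN)

theorem dhatI_freeMod_le (x y : ℝ × ℝ) :
    dhatI p (FreeMod k fun _ : Fin 1 => x) (FreeMod k fun _ : Fin 1 => y) ≤
      ENNReal.ofReal ((|x.1 - y.1| ^ p + |x.2 - y.2| ^ p) ^ (1 / p)) :=
  (dhatI_le_labelDist (presents_freeMod _ Fin.elim0) (presents_freeMod _ Fin.elim0)).trans_eq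
    (by simp [labelDist])

theorem dhatI_freeMod_zero_le (hp : 0 < p) {r : ℝ} (hr : 0 ≤ r) :
    dhatI p (FreeMod k fun _ : Fin 1 => ((0, 0) : ℝ × ℝ))
        (FreeMod k fun _ : Fin 1 => ((r, r) : ℝ × ℝ)) ≤
      ENNReal.ofReal ((2 : ℝ) ^ (1 / p) * r) :=
  (dhatI_freeMod_le _ _).trans_eq <| by
    simp only [zero_sub, abs_neg, abs_of_nonneg hr, ← two_mul,
      mul_rpow_rpow_one_div zero_le_two hr hp.ne']

variable {M : PersMod (ℝ × ℝ) k}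

theorem four_rpow_mul_le_dhatI (hp : 0 < p) {r : ℝ} (hr : 0 ≤ r)
    (hM : IsIndicatorModule M {a | ∃ i, ![((0 : ℝ), (-1 : ℝ)), ((-1 : ℝ), (0 : ℝ))] i ≤ a}) :
    ENNReal.ofReal ((4 : ℝ) ^ (1 / p) * r) ≤
      dhatI p M (FreeMod k fun _ : Fin 1 => ((r, r) : ℝ × ℝ)) := by
  refine ofReal_le_dhatI fun n c A rl rl' cl cl' hPM hPQ => ?_
  obtain ⟨i, j, hij, hi, hj, hi', hj'⟩ :=
    exists_distinct_rows_of_presents (by simp [Prod.le_def]) (by simp [Prod.le_def]) hM hPM hPQ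
  have hcard : (4 : ℝ) = 2 * ({i, j} : Finset (Fin n)).card := by
    rw [Finset.card_pair hij]
    norm_num
  rw [hcard]
  refine rpow_mul_le_labelDist hp hr _ fun l hl => ?_
  have hl : rl l ≤ (0, 0) ∧ (r, r) ≤ rl' l := by
    rcases Finset.mem_insert.mp hl with rfl | hl
    · exact ⟨hi.trans (by simp [Prod.le_def]), hi'⟩
    · rw [Finset.mem_singleton.mp hl]
      exact ⟨hj.trans (by simp [Prod.le_def]), hj'⟩
  simp only [Prod.le_def] at hl
  constructor <;> exact le_abs.mpr (Or.inr (by linarith))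

theorem dhatI_le_two_rpow (hp : 0 < p)
    (hM : IsIndicatorModule M {a | ∃ i, ![((0 : ℝ), (-1 : ℝ)), ((-1 : ℝ), (0 : ℝ))] i ≤ a}) :
    dhatI p M (FreeMod k fun _ : Fin 1 => ((0, 0) : ℝ × ℝ)) ≤
      ENNReal.ofReal ((2 : ℝ) ^ (1 / p)) := by
  have hQ : IsIndicatorModule (FreeMod k fun _ : Fin 1 => ((0, 0) : ℝ × ℝ))
      {a | ∃ i : Fin 2, (fun _ => ((0, 0) : ℝ × ℝ)) i ≤ a} := by
    simpa [Set.Ici] using isIndicatorModule_freeMod (k := k) ((0, 0) : ℝ × ℝ)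
  refine (dhatI_le_labelDist (presents_of_isIndicatorModule hM)
    (presents_of_isIndicatorModule hQ)).trans_eq ?_
  norm_num [labelDist, Real.zero_rpow hp.ne']

end Dhat

/-- Let `p ∈ [1,∞)` and let `M` be the ℝ²-persistence module with `M_a = k` when
`a ≥ (0,−1)` or `a ≥ (−1,0)` and `M_a = 0` otherwise, identity internal maps where
possible (characterized up to isomorphism by the hypotheses below); `Q^x` denotes the
free module on one generator at `x`. Then `d̂_I^p(M, Q^{(r,r)}) ≥ 4^{1/p} r`,
`d̂_I^p(M, Q^{(0,0)}) ≤ 2^{1/p}`, `d̂_I^p(Q^{(0,0)}, Q^{(r,r)}) ≤ 2^{1/p} r`;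
consequently, for `r` large enough, `d̂_I^p` violates the triangle inequality. -/
theorem dhatI_fails_triangle {k : Type} [Field k] (p : ℝ) (hp : 1 ≤ p)
    (M : PersMod (ℝ × ℝ) k)
    (hM1 : ∀ a : ℝ × ℝ, (((0 : ℝ), (-1 : ℝ)) ≤ a ∨ ((-1 : ℝ), (0 : ℝ)) ≤ a) →
      Module.rank k (M.V a) = 1)
    (hM2 : ∀ a : ℝ × ℝ, ¬(((0 : ℝ), (-1 : ℝ)) ≤ a ∨ ((-1 : ℝ), (0 : ℝ)) ≤ a) →
      ∀ v : M.V a, v = 0)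
    (hM3 : ∀ (a b : ℝ × ℝ) (h : a ≤ b),
      (((0 : ℝ), (-1 : ℝ)) ≤ a ∨ ((-1 : ℝ), (0 : ℝ)) ≤ a) →
      Function.Bijective (M.map h)) :
    (∀ r : ℝ, 0 ≤ r →
      ENNReal.ofReal ((4 : ℝ) ^ (1 / p) * r) ≤
          dhatI p M (FreeMod k fun _ : Fin 1 => ((r, r) : ℝ × ℝ)) ∧
        dhatI p M (FreeMod k fun _ : Fin 1 => ((0, 0) : ℝ × ℝ)) ≤
          ENNReal.ofReal ((2 : ℝ) ^ (1 / p)) ∧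
        dhatI p (FreeMod k fun _ : Fin 1 => ((0, 0) : ℝ × ℝ))
            (FreeMod k fun _ : Fin 1 => ((r, r) : ℝ × ℝ)) ≤
          ENNReal.ofReal ((2 : ℝ) ^ (1 / p) * r)) ∧
    (∃ r : ℝ, 0 < r ∧
      dhatI p M (FreeMod k fun _ : Fin 1 => ((0, 0) : ℝ × ℝ)) +
          dhatI p (FreeMod k fun _ : Fin 1 => ((0, 0) : ℝ × ℝ))
            (FreeMod k fun _ : Fin 1 => ((r, r) : ℝ × ℝ)) <
        dhatI p M (FreeMod k fun _ : Fin 1 => ((r, r) : ℝ × ℝ))) := by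
  have hp0 : 0 < p := by linarith
  have hM : IsIndicatorModule M {a | ∃ i, ![((0 : ℝ), (-1 : ℝ)), ((-1 : ℝ), (0 : ℝ))] i ≤ a} := by
    simpa [Fin.exists_fin_two] using
      (⟨hM1, hM2, hM3⟩ : IsIndicatorModule M {a | _ ≤ a ∨ _ ≤ a})
  refine ⟨fun r hr => ⟨four_rpow_mul_le_dhatI hp0 hr hM, dhatI_le_two_rpow hp0 hM,
    dhatI_freeMod_zero_le hp0 hr⟩, ?_⟩
  obtain ⟨r, hr, hlt⟩ := exists_pos_add_mul_lt_mul (Real.rpow_nonneg zero_le_two (1 / p))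
    (Real.rpow_lt_rpow zero_le_two (by norm_num : (2 : ℝ) < 4) (by positivity))
  refine ⟨r, hr, ?_⟩
  calc _ ≤ ENNReal.ofReal ((2 : ℝ) ^ (1 / p)) + ENNReal.ofReal ((2 : ℝ) ^ (1 / p) * r) :=
        add_le_add (dhatI_le_two_rpow hp0 hM) (dhatI_freeMod_zero_le hp0 hr.le)
    _ < ENNReal.ofReal ((4 : ℝ) ^ (1 / p) * r) := by
        rwa [← ENNReal.ofReal_add (by positivity) (by positivity),
          ENNReal.ofReal_lt_ofReal_iff (by positivity)]
    _ ≤ _ := four_rpow_mul_le_dhatI hp0 hr.le hM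
end
end
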